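/- arXiv:1710.02838 — 3 statements merged into one kernel-verified Lean document; each statement's English description precedes it below -/
import Mathlib

section
/- Let (ω, s₁, s₂) be a random element of {0,1} × {0,1} × {0,1} with P(ω=0, s₁=0, s₂=0) = P(ω=0, s₁=1, s₂=1) = P(ω=1, s₁=0, s₂=1) = P(ω=1, s₁=1, s₂=0) = 1/4. Then P(ω=1 | s₁) = P(ω=1 | s₂) = 1/2 for every signal value, P(ω=1 | s₁, s₂) ∈ {0,1} always, and for every function f : [0,1]² → [0,1] the relative loss E[(f(x₁(s₁), x₂(s₂)) − ω)²] − E[(x̂(s₁,s₂) − ω)²] is at least 1/4, where x_i(s_i) = P(ω=1 | s_i) and x̂(s₁,s₂) = P(ω=1 | s₁, s₂). -/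
noncomputable section

/-- The information structure of Proposition 1: mass 1/4 on each of
`(ω=0,s₁=0,s₂=0)`, `(ω=0,s₁=1,s₂=1)`, `(ω=1,s₁=0,s₂=1)`, `(ω=1,s₁=1,s₂=0)`. -/
def P1 (w s₁ s₂ : Bool) : ℝ :=
  if (w = false ∧ s₁ = s₂) ∨ (w = true ∧ s₁ ≠ s₂) then 1/4 else 0

/-- Expert 1's forecast `P(ω=1 | s₁ = t)`. -/
def x1 (t : Bool) : ℝ :=
  (∑ s₂ : Bool, P1 true t s₂) / (∑ w : Bool, ∑ s₂ : Bool, P1 w t s₂)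

/-- Expert 2's forecast `P(ω=1 | s₂ = t)`. -/
def x2 (t : Bool) : ℝ :=
  (∑ s₁ : Bool, P1 true s₁ t) / (∑ w : Bool, ∑ s₁ : Bool, P1 w s₁ t)

/-- The omniscient posterior `P(ω=1 | s₁, s₂)`. -/
def xhat (t₁ t₂ : Bool) : ℝ :=
  P1 true t₁ t₂ / (∑ w : Bool, P1 w t₁ t₂)

/-! The signal pair determines the state, `ω = s₁ xor s₂`, so the omniscient posterior has zero
loss; but each signal alone is independent of `ω`, so both forecasts are the constant `1/2`, any
aggregate `f (x₁, x₂)` is a constant `c`, and its loss against a fair coin is `1/4 + (c - 1/2)²`. -/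

theorem P1_eq_ite_xor (w t₁ t₂ : Bool) : P1 w t₁ t₂ = if w = (t₁ ^^ t₂) then 1/4 else 0 := by
  cases w <;> cases t₁ <;> cases t₂ <;> simp [P1]

theorem x1_eq_half (t : Bool) : x1 t = 1/2 := by
  cases t <;> norm_num [x1, P1_eq_ite_xor, Fintype.sum_bool]

theorem x2_eq_half (t : Bool) : x2 t = 1/2 := by
  cases t <;> norm_num [x2, P1_eq_ite_xor, Fintype.sum_bool]

theorem xhat_eq_ite_xor (t₁ t₂ : Bool) : xhat t₁ t₂ = if t₁ ^^ t₂ then 1 else 0 := by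
  cases t₁ <;> cases t₂ <;> norm_num [xhat, P1_eq_ite_xor, Fintype.sum_bool]

theorem sum_P1_mul_sq_xhat_sub :
    ∑ w : Bool, ∑ t₁ : Bool, ∑ t₂ : Bool,
      P1 w t₁ t₂ * (xhat t₁ t₂ - (if w then 1 else 0)) ^ 2 = 0 := by
  simp only [Fintype.sum_bool, P1_eq_ite_xor, xhat_eq_ite_xor]
  norm_num

theorem sum_P1_mul_sq_const_sub (c : ℝ) :
    ∑ w : Bool, ∑ t₁ : Bool, ∑ t₂ : Bool,
      P1 w t₁ t₂ * (c - (if w then 1 else 0)) ^ 2 = 1/4 + (c - 1/2) ^ 2 := by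
  simp only [Fintype.sum_bool, P1_eq_ite_xor]
  norm_num
  ring

theorem stmt_1 :
    (∀ t : Bool, x1 t = 1/2) ∧ (∀ t : Bool, x2 t = 1/2) ∧
    (∀ t₁ t₂ : Bool, xhat t₁ t₂ = 0 ∨ xhat t₁ t₂ = 1) ∧
    (∀ f : ℝ → ℝ → ℝ,
      (∀ a b : ℝ, a ∈ Set.Icc (0:ℝ) 1 → b ∈ Set.Icc (0:ℝ) 1 → f a b ∈ Set.Icc (0:ℝ) 1) →
      (∑ w : Bool, ∑ t₁ : Bool, ∑ t₂ : Bool,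
          P1 w t₁ t₂ * (f (x1 t₁) (x2 t₂) - (if w then 1 else 0)) ^ 2)
        - (∑ w : Bool, ∑ t₁ : Bool, ∑ t₂ : Bool,
          P1 w t₁ t₂ * (xhat t₁ t₂ - (if w then 1 else 0)) ^ 2) ≥ 1/4) := by
  refine ⟨x1_eq_half, x2_eq_half, fun t₁ t₂ => ?_, fun f _ => ?_⟩
  · rw [xhat_eq_ite_xor]
    split_ifs <;> simp
  · simp only [x1_eq_half, x2_eq_half, sum_P1_mul_sq_const_sub, sum_P1_mul_sq_xhat_sub]
    linarith [sq_nonneg (f (1/2) (1/2) - 1/2)]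
end
end

section
/- For every real x with 0 < x < 1/2, (x/(1−x))·(1/2 − x)² ≤ (5√5 − 11)/8, with equality if and only if x = (3 − √5)/4. -/
/-! The gap between the claimed maximum and the relative loss factors as
`(x - (3 - √5)/4)² · ((√5 - 1)/2 - x) / (1 - x)`: the maximiser is a double root of the gap, and the
remaining factor is positive for `x < (√5 - 1)/2`, in particular on `(0, 1/2)`. -/

open Real

lemma sub_relLoss_eq (x : ℝ) (hx : x ≠ 1) :
    (5 * √5 - 11) / 8 - x / (1 - x) * (1/2 - x) ^ 2 =
      (x - (3 - √5) / 4) ^ 2 * (((√5 - 1) / 2 - x) / (1 - x)) := by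
  have h5 : √5 ^ 2 = 5 := sq_sqrt (by norm_num)
  field_simp [sub_ne_zero.2 hx.symm]
  linear_combination (112 - 96 * x - 16 * √5) * h5

lemma relLoss_le_and_eq_iff (x : ℝ) (hx : x < (√5 - 1) / 2) :
    x / (1 - x) * (1/2 - x) ^ 2 ≤ (5 * √5 - 11) / 8 ∧
    (x / (1 - x) * (1/2 - x) ^ 2 = (5 * √5 - 11) / 8 ↔ x = (3 - √5) / 4) := by
  have hsqrt5 : √5 < 3 := by
    rw [sqrt_lt' (by norm_num)]
    norm_num
  have hx1 : x < 1 := by linarith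
  have hpos : 0 < ((√5 - 1) / 2 - x) / (1 - x) := div_pos (by linarith) (by linarith)
  have hgap := sub_relLoss_eq x hx1.ne
  refine ⟨sub_nonneg.1 (hgap ▸ by positivity), ?_⟩
  rw [eq_comm, ← sub_eq_zero, hgap, mul_eq_zero,
    or_iff_left hpos.ne', sq_eq_zero_iff, sub_eq_zero]

theorem stmt_2_general (x : ℝ) (h1 : x < 1/2) :
    x / (1 - x) * (1/2 - x) ^ 2 ≤ (5 * Real.sqrt 5 - 11) / 8 ∧
    (x / (1 - x) * (1/2 - x) ^ 2 = (5 * Real.sqrt 5 - 11) / 8 ↔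
      x = (3 - Real.sqrt 5) / 4) := by
  have hsqrt5 : 2 < √5 := by
    rw [lt_sqrt (by norm_num)]
    norm_num
  exact relLoss_le_and_eq_iff x (by linarith)

theorem stmt_2 (x : ℝ) (h0 : 0 < x) (h1 : x < 1/2) :
    x / (1 - x) * (1/2 - x) ^ 2 ≤ (5 * Real.sqrt 5 - 11) / 8 ∧
    (x / (1 - x) * (1/2 - x) ^ 2 = (5 * Real.sqrt 5 - 11) / 8 ↔
      x = (3 - Real.sqrt 5) / 4) :=
  stmt_2_general x h1
end

section
/- Let 0 < y < x < 1, set A = (1−y)/(1−x) and B = x/y, and define R : [0,1] → ℝ by R(α) = 2(x−y)² · ((1−α)A·αB) / ((1−α)A + αB) for α ∈ (0,1), with R(0) = R(1) = 0. Then R attains its maximum over [0,1] uniquely at α* = √(y(1−y)) / (√(y(1−y)) + √(x(1−x))). -/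
/-!
With `a = √((1-y)/(1-x))` and `b = √(x/y)`, `R(α)` is `2(x-y)²` times the parallel sum
`uv/(u+v)` of `u = (1-α)a²` and `v = αb²`, and
`a²b²/(a+b)² - uv/(u+v) = a²b²(a - (a+b)α)² / ((a+b)²(u+v))`.
So `R(α) ≤ 2(x-y)² a²b²/(a+b)²` with equality exactly at `α = a/(a+b)`, which after
clearing `√y √(1-x)` is the stated `α*`.
-/

open Real

noncomputable def parallelSum (u v : ℝ) : ℝ := u * v / (u + v)

section ParallelSum

variable {a b α : ℝ}

lemma convex_comb_sq_pos (ha : 0 < a) (hb : 0 < b) (h0 : 0 ≤ α) (h1 : α ≤ 1) :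
    0 < (1 - α) * a ^ 2 + α * b ^ 2 := by
  rcases h1.lt_or_eq with h1 | rfl
  · have : 0 < (1 - α) * a ^ 2 := by have := sub_pos.2 h1; positivity
    positivity
  · simp only [sub_self, zero_mul, zero_add, one_mul]
    positivity

lemma sq_mul_sq_div_sub_parallelSum (hab : a + b ≠ 0) (hD : (1 - α) * a ^ 2 + α * b ^ 2 ≠ 0) :
    a ^ 2 * b ^ 2 / (a + b) ^ 2 - parallelSum ((1 - α) * a ^ 2) (α * b ^ 2)
      = a ^ 2 * b ^ 2 * (a - (a + b) * α) ^ 2 / ((a + b) ^ 2 * ((1 - α) * a ^ 2 + α * b ^ 2)) := by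
  rw [parallelSum, div_sub_div _ _ (pow_ne_zero 2 hab) hD,
    div_eq_div_iff (mul_ne_zero (pow_ne_zero 2 hab) hD)
      (mul_ne_zero (pow_ne_zero 2 hab) hD)]
  ring

lemma parallelSum_le (ha : 0 < a) (hb : 0 < b) (h0 : 0 ≤ α) (h1 : α ≤ 1) :
    parallelSum ((1 - α) * a ^ 2) (α * b ^ 2) ≤ a ^ 2 * b ^ 2 / (a + b) ^ 2 := by
  have hD := convex_comb_sq_pos ha hb h0 h1
  rw [← sub_nonneg, sq_mul_sq_div_sub_parallelSum (by positivity) hD.ne']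
  positivity

lemma parallelSum_eq_iff (ha : 0 < a) (hb : 0 < b) (h0 : 0 ≤ α) (h1 : α ≤ 1) :
    parallelSum ((1 - α) * a ^ 2) (α * b ^ 2) = a ^ 2 * b ^ 2 / (a + b) ^ 2 ↔
      α = a / (a + b) := by
  have hD := convex_comb_sq_pos ha hb h0 h1
  have hab : 0 < a + b := by positivity
  rw [eq_comm, ← sub_eq_zero, sq_mul_sq_div_sub_parallelSum hab.ne' hD.ne', eq_div_iff hab.ne',
    div_eq_zero_iff, or_iff_left (by positivity), mul_eq_zero, or_iff_right (by positivity),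
    sq_eq_zero_iff, sub_eq_zero, eq_comm, mul_comm]

lemma parallelSum_at_opt (ha : 0 < a) (hb : 0 < b) :
    parallelSum ((1 - a / (a + b)) * a ^ 2) (a / (a + b) * b ^ 2) = a ^ 2 * b ^ 2 / (a + b) ^ 2 :=
  (parallelSum_eq_iff ha hb (by positivity) (div_le_one_of_le₀ (by linarith) (by positivity))).2 rfl

end ParallelSum

lemma sqrt_weight_eq {x y : ℝ} (hy : 0 < y) (hy1 : y < 1) (hx : 0 < x) (hx1 : x < 1) :
    √(y * (1 - y)) / (√(y * (1 - y)) + √(x * (1 - x)))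
      = √((1 - y) / (1 - x)) / (√((1 - y) / (1 - x)) + √(x / y)) := by
  have : 0 < √y := sqrt_pos.2 hy
  have : 0 < √(1 - x) := sqrt_pos.2 (by linarith)
  have : 0 < √(1 - y) := sqrt_pos.2 (by linarith)
  have : 0 < √x := sqrt_pos.2 hx
  rw [sqrt_mul hy.le, sqrt_mul hx.le, sqrt_div (by linarith), sqrt_div hx.le]
  field_simp

/-- the relative loss function `R(α)` of an aggregator best-replying to the
known martingale `M_{x,y,α}` attains its maximum over `[0,1]` uniquely at
`α* = √(y(1-y)) / (√(y(1-y)) + √(x(1-x)))`.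
(The displayed formula itself vanishes at `α = 0` and `α = 1`.) -/
theorem stmt_8 (x y : ℝ) (hy : 0 < y) (hyx : y < x) (hx : x < 1)
    (R : ℝ → ℝ)
    (hR : ∀ α : ℝ, R α =
      2*(x - y)^2 * ((1 - α) * ((1 - y)/(1 - x)) * (α * (x/y)))
        / ((1 - α) * ((1 - y)/(1 - x)) + α * (x/y))) :
    (∀ α ∈ Set.Icc (0:ℝ) 1,
        R α ≤ R (Real.sqrt (y*(1 - y)) / (Real.sqrt (y*(1 - y)) + Real.sqrt (x*(1 - x))))) ∧
    (∀ α ∈ Set.Icc (0:ℝ) 1,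
        R α = R (Real.sqrt (y*(1 - y)) / (Real.sqrt (y*(1 - y)) + Real.sqrt (x*(1 - x)))) →
        α = Real.sqrt (y*(1 - y)) / (Real.sqrt (y*(1 - y)) + Real.sqrt (x*(1 - x)))) := by
  have hx0 : 0 < x := hy.trans hyx
  set a := √((1 - y) / (1 - x))
  set b := √(x / y)
  have ha : 0 < a := sqrt_pos.2 (div_pos (by linarith) (by linarith))
  have hb : 0 < b := sqrt_pos.2 (div_pos hx0 hy)
  have hR' : ∀ α, R α = 2 * (x - y) ^ 2 * parallelSum ((1 - α) * a ^ 2) (α * b ^ 2) := by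
    intro α
    rw [hR, sq_sqrt (div_pos (by linarith) (by linarith)).le, sq_sqrt (div_pos hx0 hy).le,
      parallelSum, mul_div_assoc]
  have hC : 0 < 2 * (x - y) ^ 2 := by have := sub_pos.2 hyx; positivity
  rw [sqrt_weight_eq hy (hyx.trans hx) hx0 hx, hR', parallelSum_at_opt ha hb]
  refine ⟨fun α ⟨h0, h1⟩ => ?_, fun α ⟨h0, h1⟩ heq => ?_⟩
  · rw [hR']
    exact mul_le_mul_of_nonneg_left (parallelSum_le ha hb h0 h1) hC.le
  · rw [hR'] at heq
    exact (parallelSum_eq_iff ha hb h0 h1).1 (mul_left_cancel₀ hC.ne' heq)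
end
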